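/- Let χ_1,…,χ_n : μ_d → ℂ* be multiplicative characters such that none of χ_1,…,χ_n and the product χ_1⋯χ_n is trivial. Then j(χ_1,…,χ_n)·j(χ̄_1,…,χ̄_n) = q^{n−1}, where χ̄_i denotes the inverse character of χ_i. -/

import Mathlib

open scoped BigOperators

noncomputable section

namespace MotivicGJ

variable {κ : Type} [Field κ] [Fintype κ] [DecidableEq κ]

/-- The map `κˣ → μ_d`, `m ↦ m ^ ((q - 1) / d)`, where `q = |κ|`. -/
def toMu (d : ℕ) (hd : d ∣ Fintype.card κ - 1) (m : κˣ) : rootsOfUnity d κ :=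
  ⟨m ^ ((Fintype.card κ - 1) / d), by
    rw [mem_rootsOfUnity, ← pow_mul, Nat.div_mul_cancel hd, ← Fintype.card_units]
    exact pow_card_eq_one⟩

/-- The Gauss sum `g(ψ, χ) = -∑_{m ∈ κˣ} ψ(m) χ(m^((q-1)/d))`. -/
def gSum (d : ℕ) (hd : d ∣ Fintype.card κ - 1) (ψ : AddChar κ ℂ)
    (χ : rootsOfUnity d κ →* ℂˣ) : ℂ :=
  - ∑ m : κˣ, ψ (m : κ) * (χ (toMu d hd m) : ℂ)

/-- The Jacobi sum `j(χ₁, …, χₙ)`. -/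
def jSum (d : ℕ) (hd : d ∣ Fintype.card κ - 1) {n : ℕ}
    (χ : Fin n → (rootsOfUnity d κ →* ℂˣ)) : ℂ :=
  (-1 : ℂ) ^ (n - 1) *
    ∑ m ∈ Finset.univ.filter (fun m : Fin n → κˣ => (∑ i, (m i : κ)) = 1),
      ∏ i, (χ i (toMu d hd (m i)) : ℂ)

/-- The conjugate (inverse) additive character `ψ̄(a) = ψ(-a)`. -/
def conjAddChar (ψ : AddChar κ ℂ) : AddChar κ ℂ where
  toFun a := ψ (-a)
  map_zero_eq_one' := by show ψ (-0) = 1; rw [neg_zero]; exact ψ.map_zero_eq_one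
  map_add_eq_mul' a b := by show ψ (-(a + b)) = ψ (-a) * ψ (-b); rw [neg_add]; exact ψ.map_add_eq_mul _ _

/-
Through `m ↦ m ^ ((q - 1) / d)` the `χᵢ` become multiplicative characters `Φᵢ` of `κ`, and
`j(χ₁, …, χₙ) = (-1)ⁿ⁻¹ J(Φ)` with `J(Φ) = ∑_{t₁ + ⋯ + tₙ = 1} ∏ Φᵢ(tᵢ)`. Expanding `∏ g(Φᵢ)` and
grouping the terms by `s = t₁ + ⋯ + tₙ`, the substitution `t ↦ s t` identifies the fibre over
`s ≠ 0` with `(∏ Φᵢ)(s) J(Φ)`, while `t ↦ c t` multiplies the fibre over `0` by `(∏ Φᵢ)(c)`,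
which is `≠ 1` for a suitable unit `c`, so that fibre vanishes: `∏ g(Φᵢ) = J(Φ) g(∏ Φᵢ)`. Multiplying this by the same identity for
the `Φᵢ⁻¹` and using `g(ξ) g(ξ⁻¹) = ξ(-1) q` for nontrivial `ξ` gives
`J(Φ) J(Φ⁻¹) (∏ Φᵢ)(-1) q = (∏ Φᵢ)(-1) qⁿ`.
-/

open Finset

lemma addChar_map_sum {A M ι : Type*} [AddCommMonoid A] [CommMonoid M] (ψ : AddChar A M)
    (s : Finset ι) (f : ι → A) : ψ (∑ i ∈ s, f i) = ∏ i ∈ s, ψ (f i) := by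
  classical
  induction s using Finset.induction_on with
  | empty => simp
  | insert a s ha ih => rw [sum_insert ha, prod_insert ha, AddChar.map_add_eq_mul, ih]

lemma mulChar_prod_apply_units {ι R R' : Type*} [CommMonoid R] [CommMonoidWithZero R']
    (s : Finset ι) (Φ : ι → MulChar R R') (u : Rˣ) :
    (∏ i ∈ s, Φ i) u = ∏ i ∈ s, Φ i u := by
  simp only [← MulChar.coe_equivToUnitHom, ← MulChar.mulEquivToUnitHom_apply, map_prod,
    MonoidHom.finsetProd_apply, Units.coe_prod]

lemma gaussSum_mul_gaussSum_inv {F R : Type*} [Field F] [Fintype F] [CommRing R] [IsDomain R]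
    {ξ : MulChar F R} (hξ : ξ ≠ 1) {ψ : AddChar F R} (hψ : ψ.IsPrimitive) :
    gaussSum ξ ψ * gaussSum ξ⁻¹ ψ = ξ (-1) * Fintype.card F := by
  rw [← mul_gaussSum_inv_eq_gaussSum ξ⁻¹ ψ, mul_left_comm, gaussSum_mul_gaussSum_eq_card hξ hψ,
    MulChar.inv_apply', inv_neg_one]

section CommRing

variable {F R : Type*} [CommRing F] [Fintype F] [DecidableEq F] [CommRing R] {n : ℕ}

def jacobiSumAt (Φ : Fin n → MulChar F R) (s : F) : R :=
  ∑ t : Fin n → F with ∑ i, t i = s, ∏ i, Φ i (t i)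

lemma jacobiSumAt_eq_sum_units (Φ : Fin n → MulChar F R) (s : F) :
    jacobiSumAt Φ s = ∑ m : Fin n → Fˣ with ∑ i, (m i : F) = s, ∏ i, Φ i (m i) := by
  refine (sum_bij_ne_zero (fun m _ _ i => (m i : F)) (by simp +contextual) ?_ ?_
    (fun _ _ _ => rfl)).symm
  · intro m₁ _ _ m₂ _ _ h
    exact funext fun i => Units.ext (congrFun h i)
  · intro t ht hne
    have hunit (i : Fin n) : IsUnit (t i) :=
      by_contra fun h => hne (prod_eq_zero (mem_univ i) (MulChar.map_nonunit _ h))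
    refine ⟨fun i => (hunit i).unit, ?_, ?_, funext fun i => (hunit i).unit_spec⟩
    · simpa using ht
    · simpa [IsUnit.unit_spec] using hne

lemma jacobiSumAt_units_mul (Φ : Fin n → MulChar F R) (c : Fˣ) (s : F) :
    jacobiSumAt Φ (c * s) = (∏ i, Φ i c) * jacobiSumAt Φ s := by
  rw [jacobiSumAt, jacobiSumAt, mul_sum]
  refine sum_nbij' (fun t i => (c⁻¹ : Fˣ) * t i) (fun t i => c * t i) ?_ ?_ ?_ ?_ ?_
  · simp +contextual [← mul_sum]
  · simp +contextual [← mul_sum]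
  · simp
  · simp
  · simp [← prod_mul_distrib, ← map_mul]

lemma prod_gaussSum_eq_sum_jacobiSumAt (Φ : Fin n → MulChar F R) (ψ : AddChar F R) :
    ∏ i, gaussSum (Φ i) ψ = ∑ s, jacobiSumAt Φ s * ψ s := by
  calc ∏ i, gaussSum (Φ i) ψ = ∑ t : Fin n → F, ∏ i, Φ i (t i) * ψ (t i) :=
        Fintype.prod_sum _
    _ = ∑ t : Fin n → F, (∏ i, Φ i (t i)) * ψ (∑ i, t i) := by
        simp only [prod_mul_distrib, addChar_map_sum]
    _ = ∑ s, jacobiSumAt Φ s * ψ s := by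
        rw [← sum_fiberwise univ fun t : Fin n → F => ∑ i, t i]
        refine sum_congr rfl fun s _ => ?_
        rw [jacobiSumAt, sum_mul]
        exact sum_congr rfl fun t ht => by rw [(mem_filter.mp ht).2]

end CommRing

section Field

variable {F R : Type*} [Field F] [Fintype F] [DecidableEq F] [CommRing R] [IsDomain R] {n : ℕ}

lemma jacobiSumAt_eq_mul_jacobiSumAt_one {Φ : Fin n → MulChar F R} (hΦ : ∏ i, Φ i ≠ 1) (s : F) :
    jacobiSumAt Φ s = (∏ i, Φ i) s * jacobiSumAt Φ 1 := by
  rcases eq_or_ne s 0 with rfl | hs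
  · obtain ⟨c, hc⟩ := MulChar.ne_one_iff.mp hΦ
    have h := jacobiSumAt_units_mul Φ c 0
    rw [mul_zero, mulChar_prod_apply_units] at *
    rw [MulChar.map_zero, zero_mul]
    exact (mul_left_eq_self₀.mp h.symm).resolve_left hc
  · have h := jacobiSumAt_units_mul Φ (Units.mk0 s hs) 1
    rwa [mul_one, ← mulChar_prod_apply_units, Units.val_mk0] at h

lemma prod_gaussSum_eq_jacobiSumAt_one_mul {Φ : Fin n → MulChar F R} (hΦ : ∏ i, Φ i ≠ 1)
    (ψ : AddChar F R) : ∏ i, gaussSum (Φ i) ψ = jacobiSumAt Φ 1 * gaussSum (∏ i, Φ i) ψ := by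
  rw [prod_gaussSum_eq_sum_jacobiSumAt, gaussSum, mul_sum]
  refine sum_congr rfl fun s _ => ?_
  rw [jacobiSumAt_eq_mul_jacobiSumAt_one hΦ s]
  ring

end Field

lemma jacobiSumAt_one_mul_jacobiSumAt_one_inv {F : Type*} [Field F] [Fintype F] [DecidableEq F]
    {n : ℕ} {Φ : Fin n → MulChar F ℂ} (hΦ : ∀ i, Φ i ≠ 1) (hP : ∏ i, Φ i ≠ 1) :
    jacobiSumAt Φ 1 * jacobiSumAt (fun i => (Φ i)⁻¹) 1 = (Fintype.card F : ℂ) ^ (n - 1) := by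
  have hn : n ≠ 0 := by
    rintro rfl
    exact hP (Fin.prod_univ_zero _)
  obtain ⟨m, rfl⟩ := Nat.exists_eq_add_one_of_ne_zero hn
  set P := ∏ i, Φ i
  set q := (Fintype.card F : ℂ)
  have hP_inv : ∏ i, (Φ i)⁻¹ = P⁻¹ := prod_inv_distrib _
  have hP_neg_one : P (-1) = ∏ i, Φ i (-1) := by
    simpa using mulChar_prod_apply_units univ Φ (-1)
  have hψ := AddChar.FiniteField.primitiveChar_to_Complex_isPrimitive F
  set ψ := AddChar.FiniteField.primitiveChar_to_Complex F
  have hq : q ≠ 0 := Nat.cast_ne_zero.mpr Fintype.card_ne_zero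
  have hP_neg_one_ne : P (-1) ≠ 0 := MulChar.apply_ne_zero_iff.mpr isUnit_one.neg
  refine mul_right_cancel₀ (mul_ne_zero hP_neg_one_ne hq) ?_
  calc jacobiSumAt Φ 1 * jacobiSumAt (fun i => (Φ i)⁻¹) 1 * (P (-1) * q)
      = (jacobiSumAt Φ 1 * gaussSum P ψ) *
          (jacobiSumAt (fun i => (Φ i)⁻¹) 1 * gaussSum P⁻¹ ψ) := by
        rw [← gaussSum_mul_gaussSum_inv hP hψ]
        ring
    _ = ∏ i, (gaussSum (Φ i) ψ * gaussSum (Φ i)⁻¹ ψ) := by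
        rw [prod_mul_distrib, prod_gaussSum_eq_jacobiSumAt_one_mul hP,
          prod_gaussSum_eq_jacobiSumAt_one_mul (hP_inv ▸ inv_ne_one.mpr hP), hP_inv]
    _ = ∏ i, (Φ i (-1) * q) := prod_congr rfl fun i _ => gaussSum_mul_gaussSum_inv (hΦ i) hψ
    _ = q ^ (m + 1 - 1) * (P (-1) * q) := by
        rw [prod_mul_distrib, prod_const, card_univ, Fintype.card_fin, ← hP_neg_one,
          Nat.add_sub_cancel, pow_succ]
        ring

section RootsOfUnity

variable (d : ℕ) (hd : d ∣ Fintype.card κ - 1)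

def toMuHom : κˣ →* rootsOfUnity d κ where
  toFun := toMu d hd
  map_one' := Subtype.ext (one_pow _)
  map_mul' a b := Subtype.ext (mul_pow a b _)

lemma toMu_surjective : Function.Surjective (toMu (κ := κ) d hd) := by
  have hq_pos : 0 < Fintype.card κ - 1 := Nat.sub_pos_of_lt Fintype.one_lt_card
  have : NeZero d := ⟨by rintro rfl; exact hq_pos.ne' (zero_dvd_iff.mp hd)⟩
  obtain ⟨g, hg⟩ := IsCyclic.exists_ofOrder_eq_natCard (α := κˣ)
  have hg_prim : IsPrimitiveRoot g (Fintype.card κ - 1) := by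
    rw [IsPrimitiveRoot.iff_orderOf, hg, Nat.card_eq_fintype_card, Fintype.card_units]
  have hζ : IsPrimitiveRoot (g ^ ((Fintype.card κ - 1) / d)) d :=
    hg_prim.pow hq_pos (Nat.div_mul_cancel hd).symm
  intro x
  obtain ⟨i, -, hi⟩ := hζ.eq_pow_of_mem_rootsOfUnity x.2
  refine ⟨g ^ i, Subtype.ext ?_⟩
  change (g ^ i) ^ ((Fintype.card κ - 1) / d) = x
  rw [← pow_mul, mul_comm, pow_mul, hi]

def toMulChar {R : Type*} [CommMonoidWithZero R] : (rootsOfUnity d κ →* Rˣ) →* MulChar κ R :=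
  MulChar.mulEquivToUnitHom.symm.toMonoidHom.comp (MonoidHom.compHom' (toMuHom d hd))

lemma toMulChar_apply_units {R : Type*} [CommMonoidWithZero R] (χ : rootsOfUnity d κ →* Rˣ)
    (u : κˣ) : toMulChar d hd χ u = χ (toMu d hd u) :=
  MulChar.equivToUnitHom_symm_coe _ u

lemma toMulChar_injective {R : Type*} [CommMonoidWithZero R] :
    Function.Injective (toMulChar d hd (R := R)) :=
  MulChar.mulEquivToUnitHom.symm.injective.comp fun _ _ h =>
    (MonoidHom.cancel_right (toMu_surjective d hd)).mp h

lemma jSum_eq_jacobiSumAt {n : ℕ} (χ : Fin n → (rootsOfUnity d κ →* ℂˣ)) :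
    jSum d hd χ = (-1) ^ (n - 1) * jacobiSumAt (fun i => toMulChar d hd (χ i)) 1 := by
  simp only [jSum, jacobiSumAt_eq_sum_units, toMulChar_apply_units]

end RootsOfUnity

theorem jSum_mul_jSum_inv_general (d : ℕ) (hd : d ∣ Fintype.card κ - 1)
    {n : ℕ} (χ : Fin n → (rootsOfUnity d κ →* ℂˣ))
    (h1 : ∀ i, χ i ≠ 1) (hprod : (∏ i, χ i) ≠ 1) :
    jSum d hd χ * jSum d hd (fun i => (χ i)⁻¹) = (Fintype.card κ : ℂ) ^ (n - 1) := by
  have hΦ : ∀ i, toMulChar d hd (χ i) ≠ 1 := fun i =>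
    (map_ne_one_iff _ (toMulChar_injective d hd)).2 (h1 i)
  have hP : ∏ i, toMulChar d hd (χ i) ≠ 1 := by
    rw [← map_prod]
    exact (map_ne_one_iff _ (toMulChar_injective d hd)).2 hprod
  simp only [jSum_eq_jacobiSumAt, map_inv]
  rw [mul_mul_mul_comm, ← mul_pow, neg_one_mul, neg_neg, one_pow, one_mul]
  exact jacobiSumAt_one_mul_jacobiSumAt_one_inv hΦ hP

/-- If none of `χ₁, …, χₙ` and `χ₁⋯χₙ` is trivial, then
`j(χ₁,…,χₙ) ⬝ j(χ̄₁,…,χ̄ₙ) = q^(n-1)`. -/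
theorem jSum_mul_jSum_inv (d : ℕ) (hd0 : 0 < d) (hd : d ∣ Fintype.card κ - 1)
    {n : ℕ} (χ : Fin n → (rootsOfUnity d κ →* ℂˣ))
    (h1 : ∀ i, χ i ≠ 1) (hprod : (∏ i, χ i) ≠ 1) :
    jSum d hd χ * jSum d hd (fun i => (χ i)⁻¹) = (Fintype.card κ : ℂ) ^ (n - 1) :=
  jSum_mul_jSum_inv_general d hd χ h1 hprod

end MotivicGJ
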